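/- arXiv:2401.14020 — 4 statements merged into one kernel-verified Lean document; each statement's English description precedes it below -/
import Mathlib

section
/- For any n ≥ 2, m ≥ 1, any w ∈ F_n, r ∈ Z^m, s ∈ Z^n, Q ∈ M_m(Z), P ∈ M_{n×m}(Z), the map Φ: F_n × Z^m → F_n × Z^m given by u·t^a ↦ w^(a·rᵀ + u^ab·sᵀ)·t^(aQ + u^ab·P) is a well-defined group endomorphism, where u^ab ∈ Z^n is the abelianization of u. -/
open Matrix

/-- Abelianization of the free group `F_n` as a hom to `Multiplicative (Fin n → ℤ)`. -/
def abHom {n : ℕ} : FreeGroup (Fin n) →* Multiplicative (Fin n → ℤ) :=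
  FreeGroup.lift (fun i => Multiplicative.ofAdd (Pi.single i 1))

/-- The exponent-sum vector `u^ab ∈ ℤ^n` of `u ∈ F_n`. -/
def abv {n : ℕ} (u : FreeGroup (Fin n)) : Fin n → ℤ := Multiplicative.toAdd (abHom u)

/-- The FATF group `F_n × ℤ^m`. -/
abbrev FATF (n m : ℕ) := FreeGroup (Fin n) × Multiplicative (Fin m → ℤ)

/-- Type-I endomorphism formula: `u·t^a ↦ (uφ)·t^(aQ + u^ab·P)`. -/
def typeI {n m : ℕ} (φ : FreeGroup (Fin n) →* FreeGroup (Fin n))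
    (Q : Matrix (Fin m) (Fin m) ℤ) (P : Matrix (Fin n) (Fin m) ℤ) :
    FATF n m → FATF n m :=
  fun g => (φ g.1,
    Multiplicative.ofAdd (Matrix.vecMul (Multiplicative.toAdd g.2) Q + Matrix.vecMul (abv g.1) P))

/-- Type-II endomorphism formula:
`u·t^a ↦ w^(a·rᵀ + u^ab·sᵀ)·t^(aQ + u^ab·P)`. -/
def typeII {n m : ℕ} (w : FreeGroup (Fin n)) (r : Fin m → ℤ) (s : Fin n → ℤ)
    (Q : Matrix (Fin m) (Fin m) ℤ) (P : Matrix (Fin n) (Fin m) ℤ) :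
    FATF n m → FATF n m :=
  fun g => (w ^ (dotProduct (Multiplicative.toAdd g.2) r + dotProduct (abv g.1) s),
    Multiplicative.ofAdd (Matrix.vecMul (Multiplicative.toAdd g.2) Q + Matrix.vecMul (abv g.1) P))

/-- the type-II formula defines a group endomorphism of `F_n × ℤ^m`. -/
theorem typeII_is_endomorphism (n m : ℕ) (hn : 2 ≤ n) (hm : 1 ≤ m)
    (w : FreeGroup (Fin n)) (r : Fin m → ℤ) (s : Fin n → ℤ)
    (Q : Matrix (Fin m) (Fin m) ℤ) (P : Matrix (Fin n) (Fin m) ℤ) :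
    ∃ Φ : FATF n m →* FATF n m, ∀ (u : FreeGroup (Fin n)) (a : Fin m → ℤ),
      Φ (u, Multiplicative.ofAdd a)
        = (w ^ (dotProduct a r + dotProduct (abv u) s),
           Multiplicative.ofAdd (Matrix.vecMul a Q + Matrix.vecMul (abv u) P)) := by
  refine ⟨MonoidHom.mk' (typeII w r s Q P) ?_, fun u a => rfl⟩
  rintro ⟨u, x⟩ ⟨v, y⟩
  have habv : abv (u * v) = abv u + abv v := by
    simp [abv, _root_.map_mul, toAdd_mul]
  simp only [typeII, Prod.mk_mul_mk, toAdd_mul, habv, Prod.mk.injEq]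
  constructor
  · rw [← _root_.zpow_add]
    congr 1
    simp [add_dotProduct]
    ring
  · rw [← ofAdd_add]
    congr 1
    simp [add_vecMul]
    abel
end

section
/- Let Φ be a type-II endomorphism of F_n × Z^m with data (w, r, s, Q, P), and let u·t^a ∈ F_n × Z^m. Then for every k ≥ 1, expressing the image in terms of the exponent of w and the abelian part, the coordinate vector of (u·t^a)Φ^k equals (u^ab, a) · M₁ · M₂^{k-1}, where M₁ is the (n+m)×(1+m) block matrix with rows (sᵀ, P) and (rᵀ, Q), and M₂ is the (1+m)×(1+m) block matrix with rows (w^ab·sᵀ, w^ab·P) and (rᵀ, Q), with w^ab being the abelianization of w. -/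
open Matrix

lemma abv_zpow {n : ℕ} (w : FreeGroup (Fin n)) (l : ℤ) :
    abv (w ^ l) = l • abv w := by
  simp [abv, map_zpow]

/-- powers of a type-II endomorphism, in coordinates w.r.t. the
basis `(w, t_1, …, t_m)`:
`(u·t^a)Φ^k` has coordinate vector `(u^ab, a) · M₁ · M₂^(k-1)`. -/
theorem typeII_pow_coords (n m : ℕ)
    (w : FreeGroup (Fin n)) (r : Fin m → ℤ) (s : Fin n → ℤ)
    (Q : Matrix (Fin m) (Fin m) ℤ) (P : Matrix (Fin n) (Fin m) ℤ)
    (u : FreeGroup (Fin n)) (a : Fin m → ℤ) (k : ℕ) (hk : 1 ≤ k) :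
    -- `M₁` has block rows `(sᵀ, P)` and `(rᵀ, Q)`
    let M₁ : Matrix (Fin n ⊕ Fin m) (Fin 1 ⊕ Fin m) ℤ :=
      Matrix.fromBlocks (Matrix.of fun i _ => s i) P (Matrix.of fun j _ => r j) Q
    -- `M₂` has block rows `(w^ab·sᵀ, w^ab·P)` and `(rᵀ, Q)`
    let M₂ : Matrix (Fin 1 ⊕ Fin m) (Fin 1 ⊕ Fin m) ℤ :=
      Matrix.fromBlocks (Matrix.of fun _ _ => dotProduct (abv w) s)
        (Matrix.of fun _ j => Matrix.vecMul (abv w) P j)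
        (Matrix.of fun j _ => r j) Q
    let v : Fin 1 ⊕ Fin m → ℤ := Matrix.vecMul (Sum.elim (abv u) a) (M₁ * M₂ ^ (k - 1))
    (typeII w r s Q P)^[k] (u, Multiplicative.ofAdd a)
      = (w ^ v (Sum.inl 0), Multiplicative.ofAdd (fun j => v (Sum.inr j))) := by
  intro M₁ M₂ v
  have step : ∀ x : Fin 1 ⊕ Fin m → ℤ,
      typeII w r s Q P (w ^ x (Sum.inl 0), Multiplicative.ofAdd fun j => x (Sum.inr j))
        = (w ^ (Matrix.vecMul x M₂) (Sum.inl 0),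
           Multiplicative.ofAdd fun j => Matrix.vecMul x M₂ (Sum.inr j)) := by
    intro x
    have hab : abv (w ^ x (Sum.inl 0)) = x (Sum.inl 0) • abv w := abv_zpow w _
    have h1 : (Matrix.vecMul x M₂) (Sum.inl 0)
        = dotProduct (fun j => x (Sum.inr j)) r + dotProduct (x (Sum.inl 0) • abv w) s := by
      simp only [M₂, Matrix.vecMul, dotProduct, Fintype.sum_sum_type,
        Matrix.fromBlocks, Matrix.of_apply, Sum.elim_inl, Sum.elim_inr,
        Fin.sum_univ_one, Pi.smul_apply, smul_eq_mul, Finset.mul_sum]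
      rw [add_comm]
      congr 1
      exact Finset.sum_congr rfl fun i _ => (mul_assoc _ _ _).symm
    have h2 : ∀ j, (Matrix.vecMul x M₂) (Sum.inr j)
        = Matrix.vecMul (fun j => x (Sum.inr j)) Q j
          + Matrix.vecMul (x (Sum.inl 0) • abv w) P j := by
      intro j
      simp only [M₂, Matrix.vecMul, dotProduct, Fintype.sum_sum_type,
        Matrix.fromBlocks, Matrix.of_apply, Sum.elim_inl, Sum.elim_inr,
        Fin.sum_univ_one, Pi.smul_apply, smul_eq_mul, Finset.mul_sum]
      rw [add_comm]
      congr 1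
      exact Finset.sum_congr rfl fun i _ => (mul_assoc _ _ _).symm
    simp only [typeII, toAdd_ofAdd, hab, Prod.mk.injEq]
    refine ⟨by rw [h1], ?_⟩
    congr 1
    funext j
    rw [Pi.add_apply, h2 j]
  have base : typeII w r s Q P (u, Multiplicative.ofAdd a)
      = (w ^ (Matrix.vecMul (Sum.elim (abv u) a) M₁) (Sum.inl 0),
         Multiplicative.ofAdd fun j => Matrix.vecMul (Sum.elim (abv u) a) M₁ (Sum.inr j)) := by
    have h1 : (Matrix.vecMul (Sum.elim (abv u) a) M₁) (Sum.inl 0)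
        = dotProduct a r + dotProduct (abv u) s := by
      simp only [M₁, Matrix.vecMul, dotProduct, Fintype.sum_sum_type,
        Matrix.fromBlocks, Matrix.of_apply, Sum.elim_inl, Sum.elim_inr]
      rw [add_comm]
    have h2 : ∀ j, (Matrix.vecMul (Sum.elim (abv u) a) M₁) (Sum.inr j)
        = Matrix.vecMul a Q j + Matrix.vecMul (abv u) P j := by
      intro j
      simp only [M₁, Matrix.vecMul, dotProduct, Fintype.sum_sum_type,
        Matrix.fromBlocks, Matrix.of_apply, Sum.elim_inl, Sum.elim_inr]
      rw [add_comm]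
    simp only [typeII, toAdd_ofAdd, Prod.mk.injEq]
    refine ⟨by rw [h1], ?_⟩
    congr 1
    funext j
    rw [Pi.add_apply, h2 j]
  have main : ∀ j : ℕ, (typeII w r s Q P)^[j + 1] (u, Multiplicative.ofAdd a)
      = (w ^ (Matrix.vecMul (Sum.elim (abv u) a) (M₁ * M₂ ^ j)) (Sum.inl 0),
         Multiplicative.ofAdd fun i =>
           Matrix.vecMul (Sum.elim (abv u) a) (M₁ * M₂ ^ j) (Sum.inr i)) := by
    intro j
    induction j with
    | zero => simpa using base
    | succ j ih =>
        have hm : M₁ * M₂ ^ (j + 1) = (M₁ * M₂ ^ j) * M₂ := by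
          rw [pow_succ, Matrix.mul_assoc]
        rw [Function.iterate_succ_apply', ih, step, hm]
        simp only [← Matrix.vecMul_vecMul]
  obtain ⟨j, rfl⟩ : ∃ j, k = j + 1 := ⟨k - 1, (Nat.succ_pred_eq_of_pos hk).symm⟩
  exact main j
end

section
/- Let Φ = Φ_{φ,Q,P} be a type-I endomorphism of G = F_n × Z^m, and let k, p ∈ N and u ∈ F_n be such that uφ^{k+p} is conjugate to uφ^k in F_n. Then for all λ ≥ 1 and all a ∈ Z^m, the abelian part of (u·t^a)Φ^{k+λp} equals ((u·t^a)Φ^k τ)·T̃^λ, where T̃: Z^m → Z^m is the affine transformation x ↦ x·Q^p + (uφ^k)^ab·P^(p), and P^(p) = Σ_{i=1}^{p}(φ^ab)^{i-1}·P·Q^{p-i}. -/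
open Matrix

lemma abv_of_isConj {n : ℕ} {a b : FreeGroup (Fin n)} (h : IsConj a b) : abv a = abv b := by
  obtain ⟨c, hc⟩ := h
  have h2 : abHom c * abHom a = abHom b * abHom c := by
    rw [← _root_.map_mul, ← _root_.map_mul, hc.eq]
  rw [mul_comm (abHom b) (abHom c)] at h2
  exact congrArg Multiplicative.toAdd (mul_left_cancel h2)

lemma vecMul_finsum {N M : ℕ} (v : Fin N → ℤ) (s : Finset ℕ)
    (A : ℕ → Matrix (Fin N) (Fin M) ℤ) :
    Matrix.vecMul v (∑ i ∈ s, A i) = ∑ i ∈ s, Matrix.vecMul v (A i) := by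
  induction s using Finset.induction with
  | empty => simp [Matrix.vecMul_zero]
  | insert _ _ h ih => simp [Finset.sum_insert h, Matrix.vecMul_add, ih]

lemma typeI_iter_fst {n m : ℕ} (φ : FreeGroup (Fin n) →* FreeGroup (Fin n))
    (Q : Matrix (Fin m) (Fin m) ℤ) (P : Matrix (Fin n) (Fin m) ℤ)
    (j : ℕ) (g : FATF n m) : ((typeI φ Q P)^[j] g).1 = (⇑φ)^[j] g.1 := by
  induction j generalizing g with
  | zero => rfl
  | succ j ih =>
    rw [Function.iterate_succ_apply, Function.iterate_succ_apply]
    exact ih _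

lemma abv_iter {n : ℕ} (φ : FreeGroup (Fin n) →* FreeGroup (Fin n))
    (φab : Matrix (Fin n) (Fin n) ℤ)
    (hφab : ∀ u : FreeGroup (Fin n), abv (φ u) = Matrix.vecMul (abv u) φab)
    (i : ℕ) (v : FreeGroup (Fin n)) :
    abv ((⇑φ)^[i] v) = Matrix.vecMul (abv v) (φab ^ i) := by
  induction i generalizing v with
  | zero => simp [Matrix.vecMul_one]
  | succ i ih =>
    rw [Function.iterate_succ_apply', hφab, ih, Matrix.vecMul_vecMul, pow_succ]

lemma typeI_iter_snd {n m : ℕ} (φ : FreeGroup (Fin n) →* FreeGroup (Fin n))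
    (Q : Matrix (Fin m) (Fin m) ℤ) (P : Matrix (Fin n) (Fin m) ℤ)
    (j : ℕ) (g : FATF n m) :
    Multiplicative.toAdd ((typeI φ Q P)^[j] g).2
      = Matrix.vecMul (Multiplicative.toAdd g.2) (Q ^ j)
        + ∑ i ∈ Finset.range j,
            Matrix.vecMul (abv ((⇑φ)^[i] g.1)) (P * Q ^ (j - 1 - i)) := by
  induction j generalizing g with
  | zero => simp [Matrix.vecMul_one]
  | succ j ih =>
    rw [Function.iterate_succ_apply, ih]
    have h2 : Multiplicative.toAdd ((typeI φ Q P) g).2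
        = Matrix.vecMul (Multiplicative.toAdd g.2) Q + Matrix.vecMul (abv g.1) P := by
      simp [typeI]
    have h1 : ((typeI φ Q P) g).1 = φ g.1 := rfl
    rw [h2, h1, Matrix.add_vecMul, Matrix.vecMul_vecMul, Matrix.vecMul_vecMul,
      Finset.sum_range_succ', ← pow_succ']
    have hstep : ∀ i, (⇑φ)^[i] (φ g.1) = (⇑φ)^[i + 1] g.1 := fun i =>
      (Function.iterate_succ_apply φ i g.1).symm
    simp only [hstep, Function.iterate_zero, id_eq, Nat.add_sub_cancel, Nat.sub_zero,
      Nat.sub_sub, Nat.add_comm 1]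
    abel

/-- if `uφ^{k+p} ∼ uφ^k` in `F_n`, then for all `λ ≥ 1` and `a ∈ ℤ^m`
the abelian part of `(u·t^a)Φ^{k+λp}` is obtained from that of `(u·t^a)Φ^k` by
applying the affine map `x ↦ x·Q^p + (uφ^k)^ab·P^(p)` λ times. -/
theorem typeI_pow_conj_periodic_affine (n m : ℕ)
    (φ : FreeGroup (Fin n) →* FreeGroup (Fin n))
    (Q : Matrix (Fin m) (Fin m) ℤ) (P : Matrix (Fin n) (Fin m) ℤ)
    (φab : Matrix (Fin n) (Fin n) ℤ)
    (hφab : ∀ u : FreeGroup (Fin n), abv (φ u) = Matrix.vecMul (abv u) φab)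
    (k p : ℕ) (u : FreeGroup (Fin n))
    (hconj : IsConj ((⇑φ)^[k + p] u) ((⇑φ)^[k] u)) :
    ∀ lam : ℕ, 1 ≤ lam → ∀ a : Fin m → ℤ,
      Multiplicative.toAdd ((typeI φ Q P)^[k + lam * p] (u, Multiplicative.ofAdd a)).2
        = (fun x : Fin m → ℤ =>
            Matrix.vecMul x (Q ^ p) +
              Matrix.vecMul (abv ((⇑φ)^[k] u))
                (∑ i ∈ Finset.range p, φab ^ i * P * Q ^ (p - 1 - i)))^[lam]
            (Multiplicative.toAdd ((typeI φ Q P)^[k] (u, Multiplicative.ofAdd a)).2) := by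
  have hconjj : ∀ j : ℕ, IsConj ((⇑φ)^[k + p + j] u) ((⇑φ)^[k + j] u) := by
    intro j
    induction j with
    | zero => simpa using hconj
    | succ j ih =>
      rw [show k + p + (j + 1) = (k + p + j) + 1 by omega,
        show k + (j + 1) = (k + j) + 1 by omega,
        Function.iterate_succ_apply', Function.iterate_succ_apply']
      exact φ.map_isConj ih
  have habv : ∀ lam : ℕ, abv ((⇑φ)^[k + lam * p] u) = abv ((⇑φ)^[k] u) := by
    intro lam
    induction lam with
    | zero => simp
    | succ lam ih =>
      rw [show k + (lam + 1) * p = k + p + lam * p by ring]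
      rw [abv_of_isConj (hconjj (lam * p)), ih]
  clear hconj
  suffices key : ∀ lam : ℕ, ∀ a : Fin m → ℤ,
      Multiplicative.toAdd ((typeI φ Q P)^[k + lam * p] (u, Multiplicative.ofAdd a)).2
        = (fun x : Fin m → ℤ =>
            Matrix.vecMul x (Q ^ p) +
              Matrix.vecMul (abv ((⇑φ)^[k] u))
                (∑ i ∈ Finset.range p, φab ^ i * P * Q ^ (p - 1 - i)))^[lam]
            (Multiplicative.toAdd ((typeI φ Q P)^[k] (u, Multiplicative.ofAdd a)).2) by
    intro lam _ a; exact key lam a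
  intro lam a
  induction lam with
  | zero => simp
  | succ lam ih =>
    rw [show k + (lam + 1) * p = p + (k + lam * p) by ring,
      Function.iterate_add_apply, Function.iterate_succ_apply', ← ih]
    set g := (typeI φ Q P)^[k + lam * p] (u, Multiplicative.ofAdd a) with hg
    rw [typeI_iter_snd]
    have hfst : g.1 = (⇑φ)^[k + lam * p] u := typeI_iter_fst φ Q P _ _
    have hsum : ∀ i : ℕ, abv ((⇑φ)^[i] g.1)
        = Matrix.vecMul (abv ((⇑φ)^[k] u)) (φab ^ i) := by
      intro i
      rw [abv_iter φ φab hφab, hfst, habv]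
    simp only [hsum, Matrix.vecMul_vecMul]
    have hS : (∑ i ∈ Finset.range p, φab ^ i * (P * Q ^ (p - 1 - i)))
        = ∑ i ∈ Finset.range p, φab ^ i * P * Q ^ (p - 1 - i) :=
      Finset.sum_congr rfl fun i _ => (Matrix.mul_assoc _ _ _).symm
    rw [← vecMul_finsum, hS]
end

section
/- Let Φ be an injective type-I endomorphism of G = F_n × Z^m with data (φ, Q, P), where Q has nonzero determinant. Let u·t^a, v·t^b ∈ G and r, s ∈ N. If uφ^r is conjugate to vφ^s in F_n and (u·t^a)Φ^{r+1} is conjugate to (v·t^b)Φ^{s+1} in G, then (u·t^a)Φ^r is conjugate to (v·t^b)Φ^s in G. -/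
open Matrix

/-- Conjugacy in a product of a group with a commutative group. -/
lemma prodIsConj {G H : Type*} [Group G] [CommGroup H] {x x' : G} {y y' : H} :
    IsConj ((x, y) : G × H) (x', y') ↔ IsConj x x' ∧ y = y' := by
  constructor
  · rintro ⟨c, hc⟩
    have h1 : c.val.1 * x = x' * c.val.1 := congrArg Prod.fst hc
    have h2 : c.val.2 * y = y' * c.val.2 := congrArg Prod.snd hc
    exact ⟨⟨Units.map (MonoidHom.fst G H) c, h1⟩,
      mul_left_cancel (h2.trans (mul_comm _ _))⟩
  · rintro ⟨⟨c, hc⟩, rfl⟩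
    refine ⟨Units.map (MonoidHom.inl G H) c, ?_⟩
    have : c.val * x = x' * c.val := hc
    show ((c.val, 1) : G × H) * (x, y) = (x', y) * (c.val, 1)
    simp [Prod.ext_iff, this]

/-- The free part of the iterate. -/
lemma iterFst {n m : ℕ} (φ : FreeGroup (Fin n) →* FreeGroup (Fin n))
    (Q : Matrix (Fin m) (Fin m) ℤ) (P : Matrix (Fin n) (Fin m) ℤ) (k : ℕ) (g : FATF n m) :
    ((typeI φ Q P)^[k] g).1 = (⇑φ)^[k] g.1 := by
  induction k with
  | zero => rfl
  | succ k ih => rw [Function.iterate_succ_apply', Function.iterate_succ_apply', ← ih]; rfl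

/-- Conjugate elements of the free group have equal abelianizations. -/
lemma abv_eq_of_isConj {n : ℕ} {u v : FreeGroup (Fin n)} (h : IsConj u v) :
    abv u = abv v := by
  rcases h with ⟨c, hc⟩
  have : abHom (c.val * u) = abHom (v * c.val) := congrArg abHom hc
  rw [_root_.map_mul, _root_.map_mul, mul_comm] at this
  have := mul_right_cancel this
  simpa [abv] using congrArg Multiplicative.toAdd this

/-- for an injective type-I endomorphism `Φ` of `F_n × ℤ^m`,
if `uφ^r ∼ vφ^s` in `F_n` and `(u·t^a)Φ^{r+1} ∼ (v·t^b)Φ^{s+1}` in `G`,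
then `(u·t^a)Φ^r ∼ (v·t^b)Φ^s` in `G`. -/
theorem typeI_pushing_powers_down (n m : ℕ)
    (φ : FreeGroup (Fin n) →* FreeGroup (Fin n))
    (Q : Matrix (Fin m) (Fin m) ℤ) (P : Matrix (Fin n) (Fin m) ℤ)
    (hφ : Function.Injective ⇑φ) (hQ : Q.det ≠ 0)
    (u v : FreeGroup (Fin n)) (a b : Fin m → ℤ) (r s : ℕ)
    (hfree : IsConj ((⇑φ)^[r] u) ((⇑φ)^[s] v))
    (h : IsConj ((typeI φ Q P)^[r + 1] (u, Multiplicative.ofAdd a))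
                ((typeI φ Q P)^[s + 1] (v, Multiplicative.ofAdd b))) :
    IsConj ((typeI φ Q P)^[r] (u, Multiplicative.ofAdd a))
           ((typeI φ Q P)^[s] (v, Multiplicative.ofAdd b)) := by
  set f := typeI φ Q P with hf
  set X := f^[r] (u, Multiplicative.ofAdd a) with hX
  set Y := f^[s] (v, Multiplicative.ofAdd b) with hY
  have hX1 : X.1 = (⇑φ)^[r] u := by rw [hX, iterFst]
  have hY1 : Y.1 = (⇑φ)^[s] v := by rw [hY, iterFst]
  have hconj1 : IsConj X.1 Y.1 := by rw [hX1, hY1]; exact hfree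
  have habv : abv X.1 = abv Y.1 := abv_eq_of_isConj hconj1
  -- analyze h at level +1
  have hXs : f^[r + 1] (u, Multiplicative.ofAdd a) = f X := by
    rw [Function.iterate_succ_apply']
  have hYs : f^[s + 1] (v, Multiplicative.ofAdd b) = f Y := by
    rw [Function.iterate_succ_apply']
  rw [hXs, hYs] at h
  have h2 : (f X).2 = (f Y).2 := by
    rcases (prodIsConj.mp (show IsConj ((f X).1, (f X).2) ((f Y).1, (f Y).2) from h)) with ⟨_, h2⟩
    exact h2
  have h2' : Matrix.vecMul (Multiplicative.toAdd X.2) Q + Matrix.vecMul (abv X.1) P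
      = Matrix.vecMul (Multiplicative.toAdd Y.2) Q + Matrix.vecMul (abv Y.1) P := by
    have := congrArg Multiplicative.toAdd h2
    simpa [hf, typeI] using this
  rw [habv] at h2'
  have h3 : Matrix.vecMul (Multiplicative.toAdd X.2) Q
      = Matrix.vecMul (Multiplicative.toAdd Y.2) Q := by
    exact add_right_cancel h2'
  have h4 : (Multiplicative.toAdd X.2 - Multiplicative.toAdd Y.2) ᵥ* Q = 0 := by
    rw [Matrix.sub_vecMul, h3, sub_self]
  have h5 : Multiplicative.toAdd X.2 = Multiplicative.toAdd Y.2 :=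
    sub_eq_zero.mp (Matrix.eq_zero_of_vecMul_eq_zero hQ h4)
  have h6 : X.2 = Y.2 := Multiplicative.toAdd.injective h5
  have : IsConj (X.1, X.2) (Y.1, Y.2) := prodIsConj.mpr ⟨hconj1, h6⟩
  simpa using this
end
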